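/- Let K and L be essentially small tt-categories with K rigid, let F : K → L be a tt-functor and let P ∈ Spc(K) be a prime. Then the tt-ideal of L generated by the class F(P) = {F(x) : x ∈ P} admits the following description: ⟨F(P)⟩ = {y ∈ L : there exists x ∈ P such that y ∈ ⟨F(x)⟩}. -/

import Mathlib

/-!
Basic notions of tensor-triangular geometry (Balmer), formalized from scratch:
tt-categories (pretriangulated + monoidal, with tensor exact in each variable),
tt-ideals, prime tt-ideals, the Balmer spectrum `Spc` with its topology,
tensor powers of objects and morphisms, rigidity.
-/

open CategoryTheory Category Limits ZeroObject Pretriangulated MonoidalCategory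

universe v u v' u'

namespace TT

variable (K : Type u) [Category.{v} K] [HasZeroObject K] [Preadditive K]
  [HasShift K ℤ] [∀ n : ℤ, (shiftFunctor K n).Additive] [Pretriangulated K]
  [MonoidalCategory K]

/-- The tensor is exact (triangulated) in each variable: tensoring a distinguished
triangle with an object (on either side) again yields a distinguished triangle. -/
def TensorExact : Prop :=
  ∀ (x : K) (T : Triangle K), (T ∈ distTriang K) →
    (∃ h : x ⊗ T.obj₃ ⟶ (x ⊗ T.obj₁)⟦(1:ℤ)⟧,
      Triangle.mk (x ◁ T.mor₁) (x ◁ T.mor₂) h ∈ distTriang K) ∧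
    (∃ h : T.obj₃ ⊗ x ⟶ (T.obj₁ ⊗ x)⟦(1:ℤ)⟧,
      Triangle.mk (T.mor₁ ▷ x) (T.mor₂ ▷ x) h ∈ distTriang K)

/-- Rigidity: every object `x` has a dual `x^∨`, i.e. takes part in an exact pairing
(coevaluation `η : 𝟙 ⟶ x^∨ ⊗ x` and evaluation `ε : x ⊗ x^∨ ⟶ 𝟙` satisfying the
triangle identities, which yield the adjunction `x ⊗ - ⊣ x^∨ ⊗ -`). -/
def Rigid : Prop := ∀ x : K, ∃ xd : K, Nonempty (ExactPairing xd x)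

variable {K}

/-- A tt-ideal: a (full, replete) class of objects closed under shifts, cones,
direct summands (retracts) and tensoring with arbitrary objects. -/
structure IsTTIdeal (I : Set K) : Prop where
  zero_mem : (0 : K) ∈ I
  shift_mem : ∀ (n : ℤ), ∀ x ∈ I, (x⟦n⟧ : K) ∈ I
  cone_mem : ∀ T : Triangle K, (T ∈ distTriang K) → T.obj₁ ∈ I → T.obj₂ ∈ I → T.obj₃ ∈ I
  retract_mem : ∀ x z : K, z ∈ I → ∀ (i : x ⟶ z) (r : z ⟶ x), i ≫ r = 𝟙 x → x ∈ I
  tensor_mem : ∀ x ∈ I, ∀ y : K, x ⊗ y ∈ I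
  tensor_mem' : ∀ x ∈ I, ∀ y : K, y ⊗ x ∈ I

/-- A prime tt-ideal: a proper tt-ideal `P` such that `x ⊗ y ∈ P` implies
`x ∈ P` or `y ∈ P`. -/
structure IsPrimeTTIdeal (P : Set K) extends IsTTIdeal P : Prop where
  ne_univ : P ≠ Set.univ
  mem_or_mem : ∀ x y : K, x ⊗ y ∈ P → x ∈ P ∨ y ∈ P

variable (K) in
/-- The Balmer spectrum: the set of prime tt-ideals. -/
def Spc := {P : Set K // IsPrimeTTIdeal P}

/-- The Balmer topology on `Spc K`, generated by the basic open subsets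
`U(x) = {P ∈ Spc K | x ∈ P}`. -/
instance : TopologicalSpace (Spc K) :=
  TopologicalSpace.generateFrom {U | ∃ x : K, U = {P : Spc K | x ∈ P.1}}

/-- The tt-ideal `⟨E⟩` generated by a class of objects `E`. -/
def ttIdealGen (E : Set K) : Set K := ⋂₀ {I : Set K | IsTTIdeal I ∧ E ⊆ I}

/-- `n`-fold tensor power of an object (`x^⊗0 = 𝟙`). -/
def opow (x : K) : ℕ → K
  | 0 => 𝟙_ K
  | n + 1 => opow x n ⊗ x

/-- `n`-fold tensor power `f^⊗n` of a morphism. -/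
def mpow {x y : K} (f : x ⟶ y) : ∀ n : ℕ, (opow x n ⟶ opow y n)
  | 0 => 𝟙 _
  | n + 1 => mpow f n ⊗ₘ f

end TT

open TT

variable {K : Type u} [Category.{v} K] [HasZeroObject K] [Preadditive K]
  [HasShift K ℤ] [∀ n : ℤ, (shiftFunctor K n).Additive] [Pretriangulated K]
  [MonoidalCategory K] [SymmetricCategory K] [EssentiallySmall.{v} K]
variable {L : Type u'} [Category.{v'} L] [HasZeroObject L] [Preadditive L]
  [HasShift L ℤ] [∀ n : ℤ, (shiftFunctor L n).Additive] [Pretriangulated L]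
  [MonoidalCategory L] [SymmetricCategory L] [EssentiallySmall.{v'} L]


/-
A tt-ideal `I` of `K` is closed under `⊞`, and `F x₁` and `F x₂` are retracts of `F (x₁ ⊞ x₂)`,
so the ideals `⟨F x⟩` for `x ∈ I` form a directed family. The union of a directed family of
tt-ideals is a tt-ideal (a distinguished triangle has only two vertices to place in a common
member), hence this union is the tt-ideal generated by `F(I)`.
-/

namespace TT

variable {C : Type*} [Category C] [HasZeroObject C] [Preadditive C]
  [HasShift C ℤ] [∀ n : ℤ, (shiftFunctor C n).Additive] [Pretriangulated C]
  [MonoidalCategory C]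
variable {D : Type*} [Category D] [HasZeroObject D] [Preadditive D]
  [HasShift D ℤ] [∀ n : ℤ, (shiftFunctor D n).Additive] [Pretriangulated D]
  [MonoidalCategory D]

theorem isTTIdeal_ttIdealGen (E : Set C) : IsTTIdeal (ttIdealGen E) where
  zero_mem _ hI := hI.1.zero_mem
  shift_mem n _ hx I hI := hI.1.shift_mem n _ (hx I hI)
  cone_mem T hT h₁ h₂ I hI := hI.1.cone_mem T hT (h₁ I hI) (h₂ I hI)
  retract_mem x z hz i r hir I hI := hI.1.retract_mem x z (hz I hI) i r hir
  tensor_mem _ hx y I hI := hI.1.tensor_mem _ (hx I hI) y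
  tensor_mem' _ hx y I hI := hI.1.tensor_mem' _ (hx I hI) y

theorem subset_ttIdealGen (E : Set C) : E ⊆ ttIdealGen E :=
  fun _ hx _ hI => hI.2 hx

theorem ttIdealGen_subset {E I : Set C} (hI : IsTTIdeal I) (hE : E ⊆ I) :
    ttIdealGen E ⊆ I :=
  fun _ hx => hx I ⟨hI, hE⟩

theorem ttIdealGen_mono {E E' : Set C} (h : E ⊆ E') : ttIdealGen E ⊆ ttIdealGen E' :=
  ttIdealGen_subset (isTTIdeal_ttIdealGen E') (h.trans (subset_ttIdealGen E'))

theorem ttIdealGen_singleton_subset_of_retract {x z : C} (h : Retract x z) :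
    ttIdealGen {x} ⊆ ttIdealGen {z} := by
  refine ttIdealGen_subset (isTTIdeal_ttIdealGen _) (Set.singleton_subset_iff.2 ?_)
  exact (isTTIdeal_ttIdealGen _).retract_mem x z (subset_ttIdealGen _ rfl) h.i h.r h.retract

theorem IsTTIdeal.biprod_mem {I : Set C} (hI : IsTTIdeal I) {x y : C}
    (hx : x ∈ I) (hy : y ∈ I) : (x ⊞ y : C) ∈ I :=
  hI.cone_mem (Triangle.invRotate (binaryBiproductTriangle x y))
    (inv_rot_of_distTriang _ (binaryBiproductTriangle_distinguished x y))
    (hI.shift_mem (-1) y hy) hx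

theorem isTTIdeal_iUnion {ι : Type*} [Nonempty ι] {I : ι → Set C}
    (hI : ∀ i, IsTTIdeal (I i)) (hdir : Directed (· ⊆ ·) I) : IsTTIdeal (⋃ i, I i) where
  zero_mem :=
    let ⟨i₀⟩ := ‹Nonempty ι›
    Set.mem_iUnion.2 ⟨i₀, (hI i₀).zero_mem⟩
  shift_mem n x hx :=
    let ⟨i, hx⟩ := Set.mem_iUnion.1 hx
    Set.mem_iUnion.2 ⟨i, (hI i).shift_mem n x hx⟩
  cone_mem T hT h₁ h₂ :=
    let ⟨i₁, h₁⟩ := Set.mem_iUnion.1 h₁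
    let ⟨i₂, h₂⟩ := Set.mem_iUnion.1 h₂
    let ⟨j, hij₁, hij₂⟩ := hdir i₁ i₂
    Set.mem_iUnion.2 ⟨j, (hI j).cone_mem T hT (hij₁ h₁) (hij₂ h₂)⟩
  retract_mem x z hz r s hrs :=
    let ⟨i, hz⟩ := Set.mem_iUnion.1 hz
    Set.mem_iUnion.2 ⟨i, (hI i).retract_mem x z hz r s hrs⟩
  tensor_mem x hx y :=
    let ⟨i, hx⟩ := Set.mem_iUnion.1 hx
    Set.mem_iUnion.2 ⟨i, (hI i).tensor_mem x hx y⟩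
  tensor_mem' x hx y :=
    let ⟨i, hx⟩ := Set.mem_iUnion.1 hx
    Set.mem_iUnion.2 ⟨i, (hI i).tensor_mem' x hx y⟩

theorem ttIdealGen_range_eq_iUnion {ι : Type*} [Nonempty ι] (f : ι → C)
    (hdir : Directed (· ⊆ ·) fun i => ttIdealGen {f i}) :
    ttIdealGen (Set.range f) = ⋃ i, ttIdealGen {f i} := by
  refine (ttIdealGen_subset (isTTIdeal_iUnion (fun i => isTTIdeal_ttIdealGen _) hdir) ?_).antisymm
    (Set.iUnion_subset fun i => ttIdealGen_mono (Set.singleton_subset_iff.2 ⟨i, rfl⟩))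
  rintro _ ⟨i, rfl⟩
  exact Set.mem_iUnion.2 ⟨i, subset_ttIdealGen _ rfl⟩

theorem directed_ttIdealGen_singleton_map {I : Set C} (hI : IsTTIdeal I) (F : C ⥤ D) :
    Directed (· ⊆ ·) fun x : I => ttIdealGen {F.obj x} := by
  rintro ⟨x₁, h₁⟩ ⟨x₂, h₂⟩
  refine ⟨⟨x₁ ⊞ x₂, hI.biprod_mem h₁ h₂⟩, ?_, ?_⟩
  · exact ttIdealGen_singleton_subset_of_retract
      (Retract.map ⟨biprod.inl, biprod.fst, biprod.inl_fst⟩ F)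
  · exact ttIdealGen_singleton_subset_of_retract
      (Retract.map ⟨biprod.inr, biprod.snd, biprod.inr_snd⟩ F)

end TT

theorem ttIdealGen_image_of_prime_general
    (F : K ⥤ L)
    (P : Spc K) :
    ttIdealGen (F.obj '' P.1) = {y : L | ∃ x ∈ P.1, y ∈ ttIdealGen {F.obj x}} := by
  have hP : IsTTIdeal P.1 := P.2.toIsTTIdeal
  have : Nonempty P.1 := ⟨⟨0, hP.zero_mem⟩⟩
  rw [Set.image_eq_range, ttIdealGen_range_eq_iUnion _ (directed_ttIdealGen_singleton_map hP F)]
  ext y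
  simp

/-- **Lemma (Balmer).** Let `K`, `L` be essentially small tt-categories with `K` rigid,
`F : K ⥤ L` a tt-functor and `P ∈ Spc K` a prime. Then the tt-ideal of `L` generated by
`F(P) = {F(x) | x ∈ P}` is `⟨F(P)⟩ = {y ∈ L | ∃ x ∈ P, y ∈ ⟨F(x)⟩}`. -/
theorem ttIdealGen_image_of_prime
    (hK : TensorExact K) (hL : TensorExact L) (hrigid : Rigid K)
    (F : K ⥤ L) [F.CommShift ℤ] [F.IsTriangulated] [F.Monoidal]
    (P : Spc K) :
    ttIdealGen (F.obj '' P.1) = {y : L | ∃ x ∈ P.1, y ∈ ttIdealGen {F.obj x}} :=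
  ttIdealGen_image_of_prime_general F P
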